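/- In the GRW specialization of the pointwise model with g(P,P) = −1, ω = 1, and Ric(P,X) = (n−1)·π(X) for all X ∈ V: the Einstein type condition of the zeroth kind Ric⁰ = (r⁰/n)·g holds if and only if Ric = ((n−1)/4)·(5g + π⊗π); and in that case the scalar curvature is the constant 4r = (n−1)(5n−1). -/

import Mathlib

/-- The `g`-trace of a bilinear form `B`: the trace of the endomorphism
`(g♭)⁻¹ ∘ B♭` of `V`, where `B♭ : V → V*` is `X ↦ B(X,·)`. -/
noncomputable def trG {V : Type*} [AddCommGroup V] [Module ℝ V] [FiniteDimensional ℝ V]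
    (g : LinearMap.BilinForm ℝ V) (hg : g.Nondegenerate)
    (B : LinearMap.BilinForm ℝ V) : ℝ :=
  LinearMap.trace ℝ V ((g.toDual hg).symm.toLinearMap ∘ₗ B)

/-!
Contracting the Ricci identity `Ric(P, ·) = (n-1) π` with `P` gives `Ric⁰(P, P) = -(n-1)/4`,
while `Ric⁰ = c g` gives `Ric⁰(P, P) = -c`. So an Einstein `Ric⁰` is forced to be `((n-1)/4) g`,
which unwinds to `Ric = ((n-1)/4)(5g + π⊗π)`. Taking `g`-traces, with `tr_g g = n` and
`tr_g (π⊗π) = g(P, P) = -1`, gives `4r = (n-1)(5n-1)`.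
-/

section Trace

variable {V : Type*} [AddCommGroup V] [Module ℝ V] [FiniteDimensional ℝ V]
  {g : LinearMap.BilinForm ℝ V} (hg : g.Nondegenerate)

lemma trG_add (B C : LinearMap.BilinForm ℝ V) : trG g hg (B + C) = trG g hg B + trG g hg C := by
  simp only [trG, LinearMap.comp_add, map_add]

lemma trG_smul (c : ℝ) (B : LinearMap.BilinForm ℝ V) : trG g hg (c • B) = c * trG g hg B := by
  simp only [trG, LinearMap.comp_smul, map_smul, smul_eq_mul]

lemma trG_self : trG g hg g = Module.finrank ℝ V := by
  have : (g.toDual hg).symm.toLinearMap ∘ₗ g = LinearMap.id := by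
    ext x
    exact (g.toDual hg).symm_apply_apply x
  rw [trG, this, LinearMap.trace_id]

lemma trG_smulRight_flip_self (P : V) :
    trG g hg ((g.flip P).smulRight (g.flip P)) = g P P := by
  set Q := (g.toDual hg).symm (g.flip P)
  have hQ : g Q = g.flip P := (g.toDual hg).apply_symm_apply (g.flip P)
  have : (g.toDual hg).symm.toLinearMap ∘ₗ (g.flip P).smulRight (g.flip P) =
      dualTensorHom ℝ V V (g.flip P ⊗ₜ Q) := by
    ext x
    simp [dualTensorHom_apply, Q]
  rw [trG, this, LinearMap.trace_eq_contract_apply, contractLeft_apply]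
  exact LinearMap.congr_fun hQ P

lemma eq_trG_div_finrank_smul_iff [Nontrivial V] (B : LinearMap.BilinForm ℝ V) :
    B = (trG g hg B / Module.finrank ℝ V) • g ↔ ∃ c : ℝ, B = c • g := by
  refine ⟨fun h => ⟨_, h⟩, ?_⟩
  rintro ⟨c, rfl⟩
  have : (Module.finrank ℝ V : ℝ) ≠ 0 := Nat.cast_ne_zero.mpr Module.finrank_pos.ne'
  rw [trG_smul, trG_self, mul_div_cancel_right₀ _ this]

end Trace

theorem stmt_12_general {V : Type*} [AddCommGroup V] [Module ℝ V] [FiniteDimensional ℝ V]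
    (n : ℕ) (hn : 3 ≤ n) (hdim : Module.finrank ℝ V = n)
    (g : LinearMap.BilinForm ℝ V) (hg : g.Nondegenerate)
    (P : V) (hP : g P P = -1) (π : V →ₗ[ℝ] ℝ) (hπ : π = g.flip P)
    (ω : ℝ) (hω : ω = 1)
    (ππ : LinearMap.BilinForm ℝ V) (hππ : ππ = π.smulRight π)
    (Ric : LinearMap.BilinForm ℝ V)
    (hRicP : ∀ X : V, Ric P X = ((n : ℝ) - 1) * π X)
    (Ric0 : LinearMap.BilinForm ℝ V)
    (hRic0 : Ric0 = Ric - ((((n : ℝ) - 1) / 2) * (3 * ω + π P)) • g - (((n : ℝ) - 1) / 4) • ππ) :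
    (Ric0 = (trG g hg Ric0 / (n : ℝ)) • g ↔
      Ric = (((n : ℝ) - 1) / 4) • ((5 : ℝ) • g + ππ)) ∧
    (Ric0 = (trG g hg Ric0 / (n : ℝ)) • g →
      4 * trG g hg Ric = ((n : ℝ) - 1) * (5 * (n : ℝ) - 1)) := by
  have : Nontrivial V := Module.nontrivial_of_finrank_pos (R := ℝ) (by omega)
  have hπP : π P = -1 := by rw [hπ]; exact hP
  have hRic0' : Ric0 = Ric - ((n : ℝ) - 1) • g - (((n : ℝ) - 1) / 4) • ππ := by
    rw [hRic0, hω, hπP]; norm_num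
  have hRic0PP : Ric0 P P = -(((n : ℝ) - 1) / 4) := by
    simp only [hRic0', hππ, LinearMap.sub_apply, LinearMap.smul_apply, LinearMap.smulRight_apply,
      smul_eq_mul, hRicP, hπP, hP]
    ring
  have hEinstein : Ric0 = (trG g hg Ric0 / (n : ℝ)) • g ↔ Ric0 = (((n : ℝ) - 1) / 4) • g := by
    have hiff := eq_trG_div_finrank_smul_iff hg Ric0
    rw [hdim] at hiff
    rw [hiff]
    refine ⟨?_, fun h => ⟨_, h⟩⟩
    rintro ⟨c, hc⟩
    have hcPP : Ric0 P P = -c := by simp [hc, hP]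
    rwa [show c = ((n : ℝ) - 1) / 4 by linarith] at hc
  have hRic : Ric0 = (((n : ℝ) - 1) / 4) • g ↔ Ric = (((n : ℝ) - 1) / 4) • ((5 : ℝ) • g + ππ) := by
    rw [hRic0']
    constructor <;> intro h <;> rw [← sub_eq_zero] at h ⊢ <;> rw [← h] <;> module
  refine ⟨hEinstein.trans hRic, fun h => ?_⟩
  rw [(hEinstein.trans hRic).mp h, trG_smul, trG_add, trG_smul, trG_self, hdim, hππ, hπ,
    trG_smulRight_flip_self, hP]
  ring

theorem stmt_12 {V : Type*} [AddCommGroup V] [Module ℝ V] [FiniteDimensional ℝ V]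
    (n : ℕ) (hn : 3 ≤ n) (hdim : Module.finrank ℝ V = n)
    (g : LinearMap.BilinForm ℝ V) (hg : g.Nondegenerate) (hgs : g.IsSymm)
    (P : V) (hP : g P P = -1) (π : V →ₗ[ℝ] ℝ) (hπ : π = g.flip P)
    (ω : ℝ) (hω : ω = 1)
    (ππ : LinearMap.BilinForm ℝ V) (hππ : ππ = π.smulRight π)
    (Ric : LinearMap.BilinForm ℝ V) (hRicSymm : Ric.IsSymm)
    (hRicP : ∀ X : V, Ric P X = ((n : ℝ) - 1) * π X)
    (Ric0 : LinearMap.BilinForm ℝ V)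
    (hRic0 : Ric0 = Ric - ((((n : ℝ) - 1) / 2) * (3 * ω + π P)) • g - (((n : ℝ) - 1) / 4) • ππ) :
    (Ric0 = (trG g hg Ric0 / (n : ℝ)) • g ↔
      Ric = (((n : ℝ) - 1) / 4) • ((5 : ℝ) • g + ππ)) ∧
    (Ric0 = (trG g hg Ric0 / (n : ℝ)) • g →
      4 * trG g hg Ric = ((n : ℝ) - 1) * (5 * (n : ℝ) - 1)) :=
  stmt_12_general n hn hdim g hg P hP π hπ ω hω ππ hππ Ric hRicP Ric0 hRic0
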